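/- Let E be a finite-dimensional real inner product space, X ⊆ E, let (x_k) be a sequence in X converging to x ∈ X, and let f : E → ℝ be continuously differentiable. Then (x, (x_k), f) is an apocalypse on X — i.e. s(−∇f(x_k), T_{x_k}X) → 0 while s(−∇f(x), T_xX) > 0 — if and only if −∇f(x) ∈ (limsup_k T_{x_k}X)° \ (T_xX)°. -/

import Mathlib

open Filter Topology

/-- The Bouligand tangent cone of `X ⊆ E` at `x`. -/
def bTangentCone {E : Type*} [NormedAddCommGroup E] [NormedSpace ℝ E]
    (X : Set E) (x : E) : Set E :=
  {v | ∃ (xk : ℕ → E) (τ : ℕ → ℝ), (∀ k, xk k ∈ X) ∧ (∀ k, 0 < τ k) ∧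
    Tendsto τ atTop (𝓝 0) ∧ Tendsto (fun k => (τ k)⁻¹ • (xk k - x)) atTop (𝓝 v)}

/-- The polar of a set `K ⊆ E`: `K° = {w : ⟪w, z⟫ ≤ 0 for all z ∈ K}`. -/
def polarCone {E : Type*} [NormedAddCommGroup E] [InnerProductSpace ℝ E] (K : Set E) : Set E :=
  {w | ∀ z ∈ K, (inner ℝ w z : ℝ) ≤ 0}

/-- The stationarity measure `s(v, K) = max(0, sup{⟪v, z⟫ : z ∈ K, ‖z‖ = 1})`; note that on `ℝ`,
Lean's `sSup` of the empty set is `0`, matching the convention `sup ∅ = 0`. -/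
noncomputable def statMeasure {E : Type*} [NormedAddCommGroup E] [InnerProductSpace ℝ E]
    (v : E) (K : Set E) : ℝ :=
  max 0 (sSup {t : ℝ | ∃ z ∈ K, ‖z‖ = 1 ∧ (inner ℝ v z : ℝ) = t})

/-- The outer limit `limsup_k S_k`: points `u` for which there are a strictly increasing sequence
of indices `(k_i)` and points `u_i ∈ S_{k_i}` with `u_i → u`. -/
def outerLimit {E : Type*} [NormedAddCommGroup E] (S : ℕ → Set E) : Set E :=
  {u | ∃ φ : ℕ → ℕ, StrictMono φ ∧
    ∃ uk : ℕ → E, (∀ i, uk i ∈ S (φ i)) ∧ Tendsto uk atTop (𝓝 u)}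

/-!
Tangent cones are closed under positive scaling, so `s(v, K) > 0` exactly when `v ∉ K°`, and
`⟪v, z⟫ ≤ ‖z‖ s(v, K)` on `K`. The latter passes to the limit along the subsequences defining the
outer limit, giving `−∇f(x) ∈ (limsup T_{x_k}X)°` when `s(−∇f(x_k), T_{x_k}X) → 0`. Conversely, if
`s(−∇f(x_k), T_{x_k}X) > ε` infinitely often, unit witnesses of this have, by compactness of the
sphere, a limit point in the outer limit on which `⟪−∇f(x), ·⟫ ≥ ε`.
-/

section StatMeasure

variable {E : Type*} [NormedAddCommGroup E] [InnerProductSpace ℝ E] {v : E} {K : Set E}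

lemma statMeasure_nonneg : 0 ≤ statMeasure v K := le_max_left _ _

lemma inner_le_statMeasure {z : E} (hz : z ∈ K) (hz1 : ‖z‖ = 1) :
    inner ℝ v z ≤ statMeasure v K := by
  have hbdd : BddAbove {t : ℝ | ∃ z ∈ K, ‖z‖ = 1 ∧ inner ℝ v z = t} := by
    refine ⟨‖v‖, ?_⟩
    rintro _ ⟨y, -, hy1, rfl⟩
    simpa [hy1] using real_inner_le_norm v y
  exact (le_csSup hbdd ⟨z, hz, hz1, rfl⟩).trans (le_max_right _ _)

lemma exists_inner_gt_of_lt_statMeasure {c : ℝ} (hc : 0 ≤ c) (h : c < statMeasure v K) :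
    ∃ z ∈ K, ‖z‖ = 1 ∧ c < inner ℝ v z := by
  have hS : c < sSup {t : ℝ | ∃ z ∈ K, ‖z‖ = 1 ∧ inner ℝ v z = t} :=
    (lt_max_iff.mp h).resolve_left hc.not_gt
  have hne : {t : ℝ | ∃ z ∈ K, ‖z‖ = 1 ∧ inner ℝ v z = t}.Nonempty := by
    by_contra hempty
    rw [Set.not_nonempty_iff_eq_empty.mp hempty, Real.sSup_empty] at hS
    exact hc.not_gt hS
  obtain ⟨_, ⟨z, hzK, hz1, rfl⟩, hcz⟩ := exists_lt_of_lt_csSup hne hS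
  exact ⟨z, hzK, hz1, hcz⟩

lemma inner_le_norm_mul_statMeasure (hK : ∀ z ∈ K, ∀ c : ℝ, 0 < c → c • z ∈ K) {z : E}
    (hz : z ∈ K) : inner ℝ v z ≤ ‖z‖ * statMeasure v K := by
  rcases eq_or_ne z 0 with rfl | hz0
  · simp
  have hnz : 0 < ‖z‖ := norm_pos_iff.2 hz0
  have hunit := inner_le_statMeasure (v := v) (hK z hz _ (inv_pos.2 hnz))
    (norm_smul_inv_norm hz0)
  rwa [real_inner_smul_right, inv_mul_le_iff₀ hnz] at hunit

lemma statMeasure_pos_iff_notMem_polarCone (hK : ∀ z ∈ K, ∀ c : ℝ, 0 < c → c • z ∈ K) :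
    0 < statMeasure v K ↔ v ∉ polarCone K := by
  simp only [polarCone, Set.mem_ofPred_eq, not_forall, not_le, exists_prop]
  constructor
  · intro hpos
    obtain ⟨z, hzK, -, hz⟩ := exists_inner_gt_of_lt_statMeasure le_rfl hpos
    exact ⟨z, hzK, hz⟩
  · rintro ⟨z, hzK, hz⟩
    have := inner_le_norm_mul_statMeasure (v := v) hK hzK
    exact pos_of_mul_pos_right (hz.trans_le this) (norm_nonneg z)

end StatMeasure

lemma bTangentCone_smul_mem {E : Type*} [NormedAddCommGroup E] [NormedSpace ℝ E]
    {X : Set E} {x z : E} (hz : z ∈ bTangentCone X x) {c : ℝ} (hc : 0 < c) :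
    c • z ∈ bTangentCone X x := by
  obtain ⟨xk, τ, hX, hτ, hτ0, hv⟩ := hz
  refine ⟨xk, fun k => c⁻¹ * τ k, hX, fun k => mul_pos (inv_pos.2 hc) (hτ k), ?_, ?_⟩
  · simpa using hτ0.const_mul c⁻¹
  · convert hv.const_smul c using 2 with k
    rw [mul_inv, inv_inv, mul_smul]

lemma ContDiff.continuous_gradient {E : Type*} [NormedAddCommGroup E] [InnerProductSpace ℝ E]
    [CompleteSpace E] {f : E → ℝ} (hf : ContDiff ℝ 1 f) : Continuous (gradient f) :=
  (InnerProductSpace.toDual ℝ E).symm.continuous.comp (hf.continuous_fderiv one_ne_zero)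

section OuterLimit

variable {E : Type*} [NormedAddCommGroup E] [InnerProductSpace ℝ E] {K : ℕ → Set E}
  {g : ℕ → E} {w : E}

lemma inner_nonpos_of_mem_outerLimit (hK : ∀ k, ∀ z ∈ K k, ∀ c : ℝ, 0 < c → c • z ∈ K k)
    (hg : Tendsto g atTop (𝓝 w)) (hs : Tendsto (fun k => statMeasure (g k) (K k)) atTop (𝓝 0))
    {u : E} (hu : u ∈ outerLimit K) : inner ℝ w u ≤ 0 := by
  obtain ⟨φ, hφ, uk, hukK, huk⟩ := hu
  have hlhs : Tendsto (fun i => inner ℝ (g (φ i)) (uk i)) atTop (𝓝 (inner ℝ w u)) :=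
    (hg.comp hφ.tendsto_atTop).inner huk
  have hrhs : Tendsto (fun i => ‖uk i‖ * statMeasure (g (φ i)) (K (φ i))) atTop
      (𝓝 (‖u‖ * 0)) :=
    huk.norm.mul (hs.comp hφ.tendsto_atTop)
  rw [mul_zero] at hrhs
  exact le_of_tendsto_of_tendsto' hlhs hrhs fun i =>
    inner_le_norm_mul_statMeasure (hK (φ i)) (hukK i)

lemma exists_mem_outerLimit_inner_ge [FiniteDimensional ℝ E] (hg : Tendsto g atTop (𝓝 w))
    {c : ℝ} (hc : 0 ≤ c) (hfreq : ∃ᶠ k in atTop, c < statMeasure (g k) (K k)) :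
    ∃ u ∈ outerLimit K, c ≤ inner ℝ w u := by
  obtain ⟨φ, hφ, hcφ⟩ := extraction_of_frequently_atTop hfreq
  choose z hzK hz1 hcz using fun i => exists_inner_gt_of_lt_statMeasure hc (hcφ i)
  obtain ⟨u, -, ψ, hψ, hzψ⟩ := (isCompact_sphere (0 : E) 1).tendsto_subseq
    (x := z) fun i => mem_sphere_zero_iff_norm.2 (hz1 i)
  refine ⟨u, ⟨φ ∘ ψ, hφ.comp hψ, z ∘ ψ, fun i => hzK (ψ i), hzψ⟩, ?_⟩
  exact ge_of_tendsto ((hg.comp (hφ.comp hψ).tendsto_atTop).inner hzψ)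
    (Eventually.of_forall fun i => (hcz (ψ i)).le)

lemma tendsto_statMeasure_zero_iff_mem_polarCone_outerLimit [FiniteDimensional ℝ E]
    (hK : ∀ k, ∀ z ∈ K k, ∀ c : ℝ, 0 < c → c • z ∈ K k) (hg : Tendsto g atTop (𝓝 w)) :
    Tendsto (fun k => statMeasure (g k) (K k)) atTop (𝓝 0) ↔ w ∈ polarCone (outerLimit K) := by
  refine ⟨fun hs u hu => inner_nonpos_of_mem_outerLimit hK hg hs hu, fun hw => ?_⟩
  refine tendsto_order.2 ⟨fun a ha => Eventually.of_forall fun k => ha.trans_le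
    statMeasure_nonneg, fun ε hε => ?_⟩
  by_contra hnot
  have hfreq : ∃ᶠ k in atTop, ε / 2 < statMeasure (g k) (K k) :=
    (not_eventually.1 hnot).mono fun k hk => (half_lt_self hε).trans_le (not_lt.1 hk)
  obtain ⟨u, hu, hεu⟩ := exists_mem_outerLimit_inner_ge hg (half_pos hε).le hfreq
  linarith [hw u hu, half_pos hε]

end OuterLimit

theorem stmt8_general {E : Type*} [NormedAddCommGroup E] [InnerProductSpace ℝ E] [FiniteDimensional ℝ E]
    (X : Set E) (x : E) (xk : ℕ → E)
    (hlim : Tendsto xk atTop (𝓝 x)) (f : E → ℝ) (hf : ContDiff ℝ 1 f) :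
    (Tendsto (fun k => statMeasure (-gradient f (xk k)) (bTangentCone X (xk k))) atTop (𝓝 0) ∧
      0 < statMeasure (-gradient f x) (bTangentCone X x)) ↔
    -gradient f x ∈
      polarCone (outerLimit fun k => bTangentCone X (xk k)) \ polarCone (bTangentCone X x) := by
  have hgrad : Tendsto (fun k => -gradient f (xk k)) atTop (𝓝 (-gradient f x)) :=
    ((hf.continuous_gradient.tendsto x).comp hlim).neg
  rw [tendsto_statMeasure_zero_iff_mem_polarCone_outerLimit
      (fun k _ hz _ hc => bTangentCone_smul_mem hz hc) hgrad,
    statMeasure_pos_iff_notMem_polarCone fun _ hz _ hc => bTangentCone_smul_mem hz hc]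
  rfl

/-- Let `E` be a finite-dimensional real inner product space, `X ⊆ E`, `(x_k)` a
sequence in `X` converging to `x ∈ X`, and `f : E → ℝ` continuously differentiable. Then
`(x, (x_k), f)` is an apocalypse on `X` — i.e. `s(−∇f(x_k), T_{x_k}X) → 0` while
`s(−∇f(x), T_xX) > 0` — if and only if `−∇f(x) ∈ (limsup_k T_{x_k}X)° \ (T_xX)°`. -/
theorem stmt8 {E : Type*} [NormedAddCommGroup E] [InnerProductSpace ℝ E] [FiniteDimensional ℝ E]
    (X : Set E) (x : E) (hx : x ∈ X) (xk : ℕ → E) (hxk : ∀ k, xk k ∈ X)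
    (hlim : Tendsto xk atTop (𝓝 x)) (f : E → ℝ) (hf : ContDiff ℝ 1 f) :
    (Tendsto (fun k => statMeasure (-gradient f (xk k)) (bTangentCone X (xk k))) atTop (𝓝 0) ∧
      0 < statMeasure (-gradient f x) (bTangentCone X x)) ↔
    -gradient f x ∈
      polarCone (outerLimit fun k => bTangentCone X (xk k)) \ polarCone (bTangentCone X x) :=
  stmt8_general X x xk hlim f hf
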